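/- arXiv:1011.1060 — 2 statements merged into one kernel-verified Lean document; each statement's English description precedes it below -/
import Mathlib

section
/- Let Ω be a convex open subset of an affine space ℝ^n that contains a complete affine line. Then Ω contains a maximal complete affine subspace through each of its points of maximal dimension, any two maximal complete affine subspaces contained in Ω are parallel (they do not intersect and are translates of the same linear subspace), and consequently Ω is a union of parallel complete affine subspaces. -/
/-!
The directions `v` such that every line `y + ℝ v` through a point `y ∈ Ω` stays in `Ω` form a
linear subspace `L`, the lineality space of `Ω`. When `Ω` is open and convex, one line in `Ω`
with direction `v` already puts `v` in `L`: the point `y` lies strictly between a far-out point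
of that line and a point of `Ω` near `y`. Hence every affine subspace of `Ω` has direction
inside `L`, so the maximal ones are exactly the translates `x + L`, `x ∈ Ω`, which are
disjoint or equal.
-/

/-- A (nonempty) complete affine subspace contained in `Ω` that is maximal among such. -/
def IsMaxAffineIn {n : ℕ} (Ω : Set (EuclideanSpace ℝ (Fin n)))
    (S : AffineSubspace ℝ (EuclideanSpace ℝ (Fin n))) : Prop :=
  (S : Set (EuclideanSpace ℝ (Fin n))).Nonempty ∧
    (S : Set (EuclideanSpace ℝ (Fin n))) ⊆ Ω ∧
    ∀ T : AffineSubspace ℝ (EuclideanSpace ℝ (Fin n)),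
      (T : Set (EuclideanSpace ℝ (Fin n))) ⊆ Ω → S ≤ T → T = S

open Topology

section Lineality

variable {𝕜 E : Type*} [Ring 𝕜] [AddCommGroup E] [Module 𝕜 E]

variable (𝕜) in
def linealitySpace (Ω : Set E) : Submodule 𝕜 E where
  carrier := {v | ∀ y ∈ Ω, ∀ t : 𝕜, y + t • v ∈ Ω}
  add_mem' {v w} hv hw y hy t := by
    simpa only [smul_add, add_assoc] using hw _ (hv y hy t) t
  zero_mem' y hy t := by simpa only [smul_zero, add_zero] using hy
  smul_mem' c v hv y hy t := by simpa only [smul_smul] using hv y hy (t * c)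

theorem mem_linealitySpace {Ω : Set E} {v : E} :
    v ∈ linealitySpace 𝕜 Ω ↔ ∀ y ∈ Ω, ∀ t : 𝕜, y + t • v ∈ Ω :=
  Iff.rfl

theorem mk'_linealitySpace_subset {Ω : Set E} {x : E} (hx : x ∈ Ω) :
    (AffineSubspace.mk' x (linealitySpace 𝕜 Ω) : Set E) ⊆ Ω := fun y hy => by
  simpa using mem_linealitySpace.1 (AffineSubspace.mem_mk'.1 hy) x hx 1

end Lineality

section OpenConvex

variable {E : Type*} [AddCommGroup E] [Module ℝ E] [TopologicalSpace E]
  [ContinuousAdd E] [ContinuousSMul ℝ E] {Ω : Set E}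

theorem IsOpen.exists_pos_add_smul_mem (hopen : IsOpen Ω) {y : E} (hy : y ∈ Ω) (u : E) :
    ∃ ε : ℝ, 0 < ε ∧ y + ε • u ∈ Ω := by
  have hcont : Continuous fun ε : ℝ => y + ε • u := by fun_prop
  have hnhds : ∀ᶠ ε in 𝓝 (0 : ℝ), y + ε • u ∈ Ω :=
    hcont.continuousAt.preimage_mem_nhds (by simpa using hopen.mem_nhds hy)
  have hpos : ∀ᶠ ε in 𝓝[>] (0 : ℝ), 0 < ε ∧ y + ε • u ∈ Ω :=
    eventually_mem_nhdsWithin.and (hnhds.filter_mono nhdsWithin_le_nhds)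
  exact hpos.exists

theorem mem_linealitySpace_of_line_subset (hopen : IsOpen Ω) (hconv : Convex ℝ Ω)
    {p v : E} (hp : ∀ t : ℝ, p + t • v ∈ Ω) : v ∈ linealitySpace ℝ Ω := by
  refine mem_linealitySpace.2 fun y hy t => ?_
  obtain ⟨ε, hε, hz⟩ := hopen.exists_pos_add_smul_mem hy (y - p)
  have hε1 : 1 + ε ≠ 0 := by positivity
  -- `y + t v` is the convex combination of `y + ε (y - p)` and `p + ((1 + ε) t / ε) v`
  -- with weights `1 / (1 + ε)` and `ε / (1 + ε)`.
  have hcomb := hconv hz (hp ((1 + ε) * t / ε)) (a := 1 / (1 + ε)) (b := ε / (1 + ε))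
    (by positivity) (by positivity) (by field_simp)
  convert hcomb using 1
  match_scalars <;> field_simp
  ring

theorem direction_le_linealitySpace (hopen : IsOpen Ω) (hconv : Convex ℝ Ω)
    {T : AffineSubspace ℝ E} (hT : (T : Set E) ⊆ Ω) : T.direction ≤ linealitySpace ℝ Ω := by
  rcases (T : Set E).eq_empty_or_nonempty with hempty | ⟨q, hq⟩
  · rw [(AffineSubspace.coe_eq_bot_iff T).1 hempty, AffineSubspace.direction_bot]
    exact bot_le
  · refine fun v hv => mem_linealitySpace_of_line_subset hopen hconv (p := q) fun t => ?_
    rw [add_comm]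
    exact hT (AffineSubspace.vadd_mem_of_mem_direction (T.direction.smul_mem t hv) hq)

theorem le_mk'_linealitySpace (hopen : IsOpen Ω) (hconv : Convex ℝ Ω)
    {T : AffineSubspace ℝ E} (hT : (T : Set E) ⊆ Ω) {x : E} (hx : x ∈ T) :
    T ≤ AffineSubspace.mk' x (linealitySpace ℝ Ω) := by
  rw [← AffineSubspace.mk'_eq hx, AffineSubspace.mk'_le_mk'_iff]
  exact direction_le_linealitySpace hopen hconv hT

end OpenConvex

section Euclidean

variable {n : ℕ} {Ω : Set (EuclideanSpace ℝ (Fin n))}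

theorem isMaxAffineIn_mk'_linealitySpace (hopen : IsOpen Ω) (hconv : Convex ℝ Ω)
    {x : EuclideanSpace ℝ (Fin n)} (hx : x ∈ Ω) :
    IsMaxAffineIn Ω (AffineSubspace.mk' x (linealitySpace ℝ Ω)) := by
  refine ⟨⟨x, AffineSubspace.self_mem_mk' x _⟩, mk'_linealitySpace_subset hx,
    fun T hT hle => le_antisymm ?_ hle⟩
  exact le_mk'_linealitySpace hopen hconv hT (hle (AffineSubspace.self_mem_mk' x _))

theorem IsMaxAffineIn.eq_mk'_linealitySpace (hopen : IsOpen Ω) (hconv : Convex ℝ Ω)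
    {S : AffineSubspace ℝ (EuclideanSpace ℝ (Fin n))} (hS : IsMaxAffineIn Ω S)
    {x : EuclideanSpace ℝ (Fin n)} (hx : x ∈ S) :
    S = AffineSubspace.mk' x (linealitySpace ℝ Ω) :=
  (hS.2.2 _ (mk'_linealitySpace_subset (hS.2.1 hx))
    (le_mk'_linealitySpace hopen hconv hS.2.1 hx)).symm

theorem IsMaxAffineIn.direction_eq_linealitySpace (hopen : IsOpen Ω) (hconv : Convex ℝ Ω)
    {S : AffineSubspace ℝ (EuclideanSpace ℝ (Fin n))} (hS : IsMaxAffineIn Ω S) :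
    S.direction = linealitySpace ℝ Ω := by
  obtain ⟨x, hx⟩ := hS.1
  rw [hS.eq_mk'_linealitySpace hopen hconv hx, AffineSubspace.direction_mk']

end Euclidean

theorem convex_with_line_foliated_by_parallel_affine_subspaces_general {n : ℕ}
    (Ω : Set (EuclideanSpace ℝ (Fin n))) (hopen : IsOpen Ω) (hconv : Convex ℝ Ω) :
    (∀ x ∈ Ω, ∃ S : AffineSubspace ℝ (EuclideanSpace ℝ (Fin n)),
        x ∈ S ∧ IsMaxAffineIn Ω S) ∧
    (∀ S T : AffineSubspace ℝ (EuclideanSpace ℝ (Fin n)),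
        IsMaxAffineIn Ω S → IsMaxAffineIn Ω T → S ≠ T →
        Disjoint (S : Set (EuclideanSpace ℝ (Fin n)))
            (T : Set (EuclideanSpace ℝ (Fin n))) ∧
          S.direction = T.direction) ∧
    Ω = ⋃ S ∈ {S : AffineSubspace ℝ (EuclideanSpace ℝ (Fin n)) | IsMaxAffineIn Ω S},
        (S : Set (EuclideanSpace ℝ (Fin n))) := by
  have hmax_through : ∀ x ∈ Ω, ∃ S : AffineSubspace ℝ (EuclideanSpace ℝ (Fin n)),
      x ∈ S ∧ IsMaxAffineIn Ω S := fun x hx =>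
    ⟨_, AffineSubspace.self_mem_mk' x _, isMaxAffineIn_mk'_linealitySpace hopen hconv hx⟩
  refine ⟨hmax_through, fun S T hS hT hST => ⟨?_, ?_⟩, ?_⟩
  · refine Set.disjoint_left.2 fun x hxS hxT => hST ?_
    rw [hS.eq_mk'_linealitySpace hopen hconv hxS, hT.eq_mk'_linealitySpace hopen hconv hxT]
  · rw [hS.direction_eq_linealitySpace hopen hconv, hT.direction_eq_linealitySpace hopen hconv]
  · refine Set.Subset.antisymm (fun x hx => ?_) (Set.iUnion₂_subset fun S hS => hS.2.1)
    obtain ⟨S, hxS, hS⟩ := hmax_through x hx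
    exact Set.mem_biUnion hS hxS

/-- Let `Ω` be a convex open subset of `ℝ^n` containing a complete affine line.  Then
through each point of `Ω` there is a maximal complete affine subspace contained in `Ω`;
any two distinct maximal complete affine subspaces in `Ω` are parallel (disjoint, with
the same direction, hence translates of the same linear subspace and of the same, maximal,
dimension); and consequently `Ω` is the union of these parallel complete affine
subspaces. -/
theorem convex_with_line_foliated_by_parallel_affine_subspaces {n : ℕ}
    (Ω : Set (EuclideanSpace ℝ (Fin n))) (hopen : IsOpen Ω) (hconv : Convex ℝ Ω)
    (hline : ∃ p v : EuclideanSpace ℝ (Fin n), v ≠ 0 ∧ ∀ t : ℝ, p + t • v ∈ Ω) :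
    (∀ x ∈ Ω, ∃ S : AffineSubspace ℝ (EuclideanSpace ℝ (Fin n)),
        x ∈ S ∧ IsMaxAffineIn Ω S) ∧
    (∀ S T : AffineSubspace ℝ (EuclideanSpace ℝ (Fin n)),
        IsMaxAffineIn Ω S → IsMaxAffineIn Ω T → S ≠ T →
        Disjoint (S : Set (EuclideanSpace ℝ (Fin n)))
            (T : Set (EuclideanSpace ℝ (Fin n))) ∧
          S.direction = T.direction) ∧
    Ω = ⋃ S ∈ {S : AffineSubspace ℝ (EuclideanSpace ℝ (Fin n)) | IsMaxAffineIn Ω S},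
        (S : Set (EuclideanSpace ℝ (Fin n))) :=
  convex_with_line_foliated_by_parallel_affine_subspaces_general Ω hopen hconv
end

section
/- Let g ∈ SL±(n+1,ℝ) preserve a properly convex open domain Ω ⊆ ℝP^n and fix two points a, r ∈ ∂Ω corresponding to the eigenvalues of strictly largest and strictly smallest absolute value, both positive real and of multiplicity one. Suppose g fixes a third point k ∈ ∂Ω distinct from a and r. Then the open segment joining k to a (or to r) within the closure of Ω lies entirely in ∂Ω. In particular, if ∂Ω contains no nontrivial line segments (Ω strictly convex), then g has at most two fixed points on ∂Ω. -/
open Matrix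

/-- A convex open cone in `ℝ^n`: open, convex, nonempty, closed under positive
scalar multiplication, with the origin in its boundary. -/
def IsOpenConvexCone {n : ℕ} (V : Set (Fin n → ℝ)) : Prop :=
  IsOpen V ∧ Convex ℝ V ∧ V.Nonempty ∧ (∀ v ∈ V, ∀ t : ℝ, 0 < t → t • v ∈ V) ∧
    (0 : Fin n → ℝ) ∈ closure V ∧ (0 : Fin n → ℝ) ∉ V

/-- Properly convex: the closure contains no pair `{v, -v}` with `v ≠ 0`. -/
def IsProperlyConvexCone {n : ℕ} (V : Set (Fin n → ℝ)) : Prop :=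
  ∀ v : Fin n → ℝ, v ≠ 0 → ¬(v ∈ closure V ∧ -v ∈ closure V)

/-!
Rescaling `g` by its top eigenvalue `λ_a` makes `v_a` a fixed vector and strictly contracts
`v_k` and `v_r`: simplicity of `λ_a` rules out `μ = λ_a`, so dominance gives `|μ| < λ_a` and
`|λ_r| < λ_a` (were `λ_r = λ_a`, minimality would give `λ_r < |μ|`). If a positive combination `z` of `v_k` and `v_r` lay in
the open cone, so would `z - ε v_a` for small `ε > 0`; its iterates converge to `-ε v_a`, so both
`±ε v_a` lie in the closure, against proper convexity. Hence the open segment from `k` to `r`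
lies in `∂Ω`, which strict convexity forbids.
-/

open Filter Topology Polynomial

namespace Matrix

variable {ι K L : Type*} [Fintype ι] [DecidableEq ι] [Field K] [Field L] [Algebra K L]
  {g : Matrix ι ι K} {c : K} {v w : ι → K}

theorem mem_roots_charpoly_map_of_mulVec_eq_smul (hv0 : v ≠ 0) (hv : g *ᵥ v = c • v) :
    algebraMap K L c ∈ (g.charpoly.map (algebraMap K L)).roots := by
  have hev : Module.End.HasEigenvalue (toLin' g) c :=
    Module.End.hasEigenvalue_of_hasEigenvector
      ⟨Module.End.mem_eigenspace_iff.2 (by rwa [toLin'_apply]), hv0⟩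
  rw [Module.End.hasEigenvalue_iff_isRoot_charpoly, charpoly_toLin'] at hev
  exact (mem_roots ((g.charpoly_monic.map _).ne_zero)).2 hev.map

theorem exists_eq_smul_of_count_roots_charpoly_map_eq_one [DecidableEq L]
    (hcount : (g.charpoly.map (algebraMap K L)).roots.count (algebraMap K L c) = 1)
    (hv0 : v ≠ 0) (hv : g *ᵥ v = c • v) (hw : g *ᵥ w = c • w) : ∃ t : K, w = t • v := by
  by_contra! hne
  have hli : LinearIndependent K ![v, w] :=
    (LinearIndependent.pair_iff' hv0).2 fun t ht => hne t ht.symm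
  have hspan : Submodule.span K (Set.range ![v, w]) ≤ Module.End.eigenspace (toLin' g) c := by
    rw [Submodule.span_le, Set.range_subset_iff]
    intro i
    fin_cases i
    exacts [Module.End.mem_eigenspace_iff.2 (by rwa [toLin'_apply]),
      Module.End.mem_eigenspace_iff.2 (by rwa [toLin'_apply])]
  have : 2 ≤ 1 := calc
    2 = Module.finrank K (Submodule.span K (Set.range ![v, w])) := by
      rw [finrank_span_eq_card hli, Fintype.card_fin]
    _ ≤ Module.finrank K (Module.End.eigenspace (toLin' g) c) := Submodule.finrank_mono hspan
    _ ≤ g.charpoly.rootMultiplicity c := by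
      simpa only [charpoly_toLin'] using LinearMap.finrank_eigenspace_le (toLin' g) c
    _ ≤ (g.charpoly.map (algebraMap K L)).rootMultiplicity (algebraMap K L c) :=
      le_rootMultiplicity_map (g.charpoly_monic.map _).ne_zero c
    _ = 1 := by rw [← count_roots, hcount]
  omega

theorem pow_mulVec_of_mulVec_eq_smul {R : Type*} [CommSemiring R] {M : Matrix ι ι R} {a : R}
    {x : ι → R} (hx : M *ᵥ x = a • x) (m : ℕ) : (M ^ m) *ᵥ x = a ^ m • x := by
  induction m with
  | zero => simp
  | succ m ih => rw [pow_succ, ← mulVec_mulVec, hx, mulVec_smul, ih, smul_smul, pow_succ']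

theorem pow_mulVec_mem {R : Type*} [Semiring R] {M : Matrix ι ι R} {s : Set (ι → R)}
    (hM : ∀ z ∈ s, M *ᵥ z ∈ s) {z : ι → R} (hz : z ∈ s) (m : ℕ) : (M ^ m) *ᵥ z ∈ s := by
  induction m with
  | zero => simpa using hz
  | succ m ih => simpa only [pow_succ', ← mulVec_mulVec] using hM _ ih

theorem tendsto_pow_mulVec_zero_of_abs_lt_one {M : Matrix ι ι ℝ} {a : ℝ} {x : ι → ℝ}
    (hx : M *ᵥ x = a • x) (ha : |a| < 1) :
    Tendsto (fun m : ℕ => (M ^ m) *ᵥ x) atTop (𝓝 0) := by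
  simpa only [pow_mulVec_of_mulVec_eq_smul hx, zero_smul] using
    (tendsto_pow_atTop_nhds_zero_of_abs_lt_one ha).smul_const x

end Matrix

theorem IsOpen.exists_pos_sub_smul_mem {E : Type*} [AddCommGroup E] [Module ℝ E]
    [TopologicalSpace E] [IsTopologicalAddGroup E] [ContinuousSMul ℝ E] {U : Set E}
    (hU : IsOpen U) {z : E} (hz : z ∈ U) (w : E) : ∃ ε : ℝ, 0 < ε ∧ z - ε • w ∈ U := by
  have hev : ∀ᶠ t in 𝓝 (0 : ℝ), z - t • w ∈ U :=
    (show Continuous fun t : ℝ => z - t • w by fun_prop).continuousAt.eventually_mem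
      (hU.mem_nhds (by simpa using hz))
  obtain ⟨ε, hεU, hε⟩ := ((hev.filter_mono nhdsWithin_le_nhds).and
    (self_mem_nhdsWithin : Set.Ioi (0 : ℝ) ∈ 𝓝[>] 0)).exists
  exact ⟨ε, hε, hεU⟩

namespace IsOpenConvexCone

variable {N : ℕ} {C : Set (Fin N → ℝ)}

theorem smul_mem (hC : IsOpenConvexCone C) {v : Fin N → ℝ} (hv : v ∈ C) {t : ℝ} (ht : 0 < t) :
    t • v ∈ C :=
  hC.2.2.2.1 v hv t ht

theorem add_mem (hC : IsOpenConvexCone C) {x y : Fin N → ℝ} (hx : x ∈ C) (hy : y ∈ C) :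
    x + y ∈ C := by
  convert hC.smul_mem (hC.2.1 hx hy (by norm_num) (by norm_num) (add_halves 1)) two_pos using 1
  module

theorem smul_mem_closure (hC : IsOpenConvexCone C) {v : Fin N → ℝ} (hv : v ∈ closure C) {t : ℝ}
    (ht : 0 < t) : t • v ∈ closure C :=
  map_mem_closure (continuous_const_smul t) hv fun _ hu => hC.smul_mem hu ht

theorem smul_add_smul_mem_closure (hC : IsOpenConvexCone C) {x y : Fin N → ℝ}
    (hx : x ∈ closure C) (hy : y ∈ closure C) {α β : ℝ} (hα : 0 < α) (hβ : 0 < β) :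
    α • x + β • y ∈ closure C :=
  map_mem_closure₂ (f := fun x y => α • x + β • y) (by fun_prop) hx hy fun _ ha _ hb =>
    hC.add_mem (hC.smul_mem ha hα) (hC.smul_mem hb hβ)

theorem notMem_of_tendsto_pow_mulVec (hC : IsOpenConvexCone C) (hpc : IsProperlyConvexCone C)
    {M : Matrix (Fin N) (Fin N) ℝ} (hM : ∀ z ∈ C, M *ᵥ z ∈ C) {w : Fin N → ℝ}
    (hw : M *ᵥ w = w) (hwC : w ∈ closure C) (hw0 : w ≠ 0) {z : Fin N → ℝ}
    (hz : Tendsto (fun m : ℕ => (M ^ m) *ᵥ z) atTop (𝓝 0)) : z ∉ C := by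
  intro hzC
  obtain ⟨ε, hε, hzεC⟩ := hC.1.exists_pos_sub_smul_mem hzC w
  have hfix (m : ℕ) : (M ^ m) *ᵥ w = w := by
    simpa using pow_mulVec_of_mulVec_eq_smul (a := (1 : ℝ)) (by rwa [one_smul]) m
  have hlim : Tendsto (fun m : ℕ => (M ^ m) *ᵥ (z - ε • w)) atTop (𝓝 (-(ε • w))) := by
    simpa only [mulVec_sub, mulVec_smul, hfix, zero_sub] using hz.sub_const (ε • w)
  exact hpc (ε • w) (smul_ne_zero hε.ne' hw0) ⟨hC.smul_mem_closure hwC hε,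
    mem_closure_of_tendsto hlim (Eventually.of_forall (pow_mulVec_mem hM hzεC))⟩

theorem smul_add_smul_mem_frontier (hC : IsOpenConvexCone C) (hpc : IsProperlyConvexCone C)
    {g : Matrix (Fin N) (Fin N) ℝ} (hg : ∀ z ∈ C, g *ᵥ z ∈ C) {w x y : Fin N → ℝ} {l c d : ℝ}
    (hw : g *ᵥ w = l • w) (hl : 0 < l) (hwC : w ∈ closure C) (hw0 : w ≠ 0)
    (hx : g *ᵥ x = c • x) (hc : |c| < l) (hxC : x ∈ closure C)
    (hy : g *ᵥ y = d • y) (hd : |d| < l) (hyC : y ∈ closure C)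
    {α β : ℝ} (hα : 0 < α) (hβ : 0 < β) : α • x + β • y ∈ frontier C := by
  rw [hC.1.frontier_eq]
  refine ⟨hC.smul_add_smul_mem_closure hxC hyC hα hβ, ?_⟩
  have hM : ∀ z ∈ C, (l⁻¹ • g) *ᵥ z ∈ C := fun z hz => by
    rw [smul_mulVec]
    exact hC.smul_mem (hg z hz) (inv_pos.2 hl)
  have heig {v : Fin N → ℝ} {a : ℝ} (hv : g *ᵥ v = a • v) : (l⁻¹ • g) *ᵥ v = (l⁻¹ * a) • v := by
    rw [smul_mulVec, hv, smul_smul]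
  have hcontr {v : Fin N → ℝ} {a : ℝ} (hv : g *ᵥ v = a • v) (ha : |a| < l) :
      Tendsto (fun m : ℕ => ((l⁻¹ • g) ^ m) *ᵥ v) atTop (𝓝 0) := by
    refine tendsto_pow_mulVec_zero_of_abs_lt_one (heig hv) ?_
    rwa [abs_mul, abs_inv, abs_of_pos hl, inv_mul_lt_one₀ hl]
  refine hC.notMem_of_tendsto_pow_mulVec hpc hM
    (by rw [heig hw, inv_mul_cancel₀ hl.ne', one_smul]) hwC hw0 ?_
  simpa only [mulVec_add, mulVec_smul, smul_zero, add_zero] using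
    ((hcontr hx hc).const_smul α).add ((hcontr hy hd).const_smul β)

end IsOpenConvexCone

theorem third_fixed_point_gives_boundary_segment_general {n : ℕ}
    (C : Set (Fin (n + 1) → ℝ))
    (hC : IsOpenConvexCone C) (hpc : IsProperlyConvexCone C)
    (g : Matrix (Fin (n + 1)) (Fin (n + 1)) ℝ)
    (hpres : (fun v => g *ᵥ v) '' C = C)
    (va vr vk : Fin (n + 1) → ℝ) (lA lR mu : ℝ)
    (hva : va ∈ frontier C) (hva0 : va ≠ 0) (heva : g *ᵥ va = lA • va) (hlA : 0 < lA)
    (hvr : vr ∈ frontier C) (hvr0 : vr ≠ 0) (hevr : g *ᵥ vr = lR • vr)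
    (hmax : ∀ z ∈ (g.charpoly.map (algebraMap ℝ ℂ)).roots,
      z ≠ (lA : ℂ) → ‖z‖ < lA)
    (hmultA : (g.charpoly.map (algebraMap ℝ ℂ)).roots.count (lA : ℂ) = 1)
    (hmin : ∀ z ∈ (g.charpoly.map (algebraMap ℝ ℂ)).roots,
      z ≠ (lR : ℂ) → lR < ‖z‖)
    (hvk : vk ∈ frontier C) (hvk0 : vk ≠ 0) (hevk : g *ᵥ vk = mu • vk)
    (hka : ¬∃ t : ℝ, vk = t • va) (hkr : ¬∃ t : ℝ, vk = t • vr) :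
    ((∀ α β : ℝ, 0 < α → 0 < β → α • vk + β • va ∈ frontier C) ∨
      (∀ α β : ℝ, 0 < α → 0 < β → α • vk + β • vr ∈ frontier C)) ∧
    ((∀ x ∈ frontier C, ∀ y ∈ frontier C, x ≠ 0 → y ≠ 0 → (¬∃ t : ℝ, y = t • x) →
        ∃ α β : ℝ, 0 < α ∧ 0 < β ∧ α • x + β • y ∉ frontier C) → False) := by
  have hdom {v : Fin (n + 1) → ℝ} {c : ℝ} (hv0 : v ≠ 0) (hv : g *ᵥ v = c • v) (hc : c ≠ lA) :
      |c| < lA := by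
    simpa using hmax _ (mem_roots_charpoly_map_of_mulVec_eq_smul hv0 hv) (by simpa using hc)
  have hmuA : mu ≠ lA := by
    rintro rfl
    exact hka (exists_eq_smul_of_count_roots_charpoly_map_eq_one hmultA hva0 heva hevk)
  have hmu : |mu| < lA := hdom hvk0 hevk hmuA
  have hlR : |lR| < lA := by
    refine hdom hvr0 hevr fun hRA => ?_
    have := hmin _ (mem_roots_charpoly_map_of_mulVec_eq_smul hvk0 hevk)
      (by simpa [hRA] using hmuA)
    simp only [Complex.coe_algebraMap, Complex.norm_real, Real.norm_eq_abs] at this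
    linarith
  have seg (α β : ℝ) (hα : 0 < α) (hβ : 0 < β) : α • vk + β • vr ∈ frontier C :=
    hC.smul_add_smul_mem_frontier hpc (fun z hz => hpres ▸ Set.mem_image_of_mem _ hz) heva hlA
      (frontier_subset_closure hva) hva0 hevk hmu (frontier_subset_closure hvk)
      hevr hlR (frontier_subset_closure hvr) hα hβ
  refine ⟨Or.inr seg, fun hstrict => ?_⟩
  have hrk : ¬∃ t : ℝ, vr = t • vk := by
    rintro ⟨t, rfl⟩
    exact hkr ⟨t⁻¹, by rw [smul_smul, inv_mul_cancel₀ (left_ne_zero_of_smul hvr0), one_smul]⟩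
  obtain ⟨α, β, hα, hβ, hnot⟩ := hstrict vk hvk vr hvr hvk0 hvr0 hrk
  exact hnot (seg α β hα hβ)

/-- Let `g ∈ SL±(n+1,ℝ)` preserve a properly convex open domain `Ω ⊆ ℝP^n` (cone `C`)
and fix two boundary points `a`, `r` (rays of eigenvectors `va`, `vr`) whose eigenvalues
are positive real, of multiplicity one, and of strictly largest resp. strictly smallest
absolute value among all complex eigenvalues.  If `g` fixes a third boundary point `k`
(ray of an eigenvector `vk`) distinct from `a` and `r`, then the open segment joining
`k` to `a` (or to `r`) inside the closure of `Ω` lies entirely in `∂Ω`.  In particular,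
if `∂Ω` contains no nontrivial segment (strict convexity), such a third fixed point
cannot exist, so `g` has at most two fixed points on `∂Ω`. -/
theorem third_fixed_point_gives_boundary_segment {n : ℕ}
    (C : Set (Fin (n + 1) → ℝ))
    (hC : IsOpenConvexCone C) (hpc : IsProperlyConvexCone C)
    (g : Matrix (Fin (n + 1)) (Fin (n + 1)) ℝ)
    (hdet : g.det = 1 ∨ g.det = -1)
    (hpres : (fun v => g *ᵥ v) '' C = C)
    (va vr vk : Fin (n + 1) → ℝ) (lA lR mu : ℝ)
    (hva : va ∈ frontier C) (hva0 : va ≠ 0) (heva : g *ᵥ va = lA • va) (hlA : 0 < lA)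
    (hvr : vr ∈ frontier C) (hvr0 : vr ≠ 0) (hevr : g *ᵥ vr = lR • vr) (hlR : 0 < lR)
    (hmax : ∀ z ∈ (g.charpoly.map (algebraMap ℝ ℂ)).roots,
      z ≠ (lA : ℂ) → ‖z‖ < lA)
    (hmultA : (g.charpoly.map (algebraMap ℝ ℂ)).roots.count (lA : ℂ) = 1)
    (hmin : ∀ z ∈ (g.charpoly.map (algebraMap ℝ ℂ)).roots,
      z ≠ (lR : ℂ) → lR < ‖z‖)
    (hmultR : (g.charpoly.map (algebraMap ℝ ℂ)).roots.count (lR : ℂ) = 1)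
    (hvk : vk ∈ frontier C) (hvk0 : vk ≠ 0) (hevk : g *ᵥ vk = mu • vk) (hmu : mu ≠ 0)
    (hka : ¬∃ t : ℝ, vk = t • va) (hkr : ¬∃ t : ℝ, vk = t • vr) :
    ((∀ α β : ℝ, 0 < α → 0 < β → α • vk + β • va ∈ frontier C) ∨
      (∀ α β : ℝ, 0 < α → 0 < β → α • vk + β • vr ∈ frontier C)) ∧
    ((∀ x ∈ frontier C, ∀ y ∈ frontier C, x ≠ 0 → y ≠ 0 → (¬∃ t : ℝ, y = t • x) →
        ∃ α β : ℝ, 0 < α ∧ 0 < β ∧ α • x + β • y ∉ frontier C) → False) :=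
  third_fixed_point_gives_boundary_segment_general C hC hpc g hpres va vr vk lA lR mu hva hva0 heva
    hlA hvr hvr0 hevr hmax hmultA hmin hvk hvk0 hevk hka hkr
end
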